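/- arXiv:2407.14573 — 9 statements merged into one kernel-verified Lean document; each statement's English description precedes it below -/
import Mathlib

section
/- Let K > 0 be a real number and let u be a complex number with imaginary part Im(u) > 1. Then the Fourier transform of the call payoff s ↦ max(e^s − K, 0) is given by ∫_{ℝ} e^{ius} · max(e^s − K, 0) ds = −K^{iu+1}/(u² − iu), i.e. ∫_{log K}^{∞} (e^{(iu+1)s} − K e^{ius}) ds = −K^{iu+1}/(u² − iu), where K^{iu+1} denotes exp((iu+1)·log K) with the real logarithm of K. -/
open MeasureTheory Set

/- With `c = i u`, both integrals reduce to `∫_{log K}^∞ (e^{(c+1)s} - K e^{cs}) ds`, since the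
payoff vanishes for `s ≤ log K`. For `Re c < -1` both exponentials decay, each piece is
`-e^{a log K}/a`, and `K e^{c log K} = e^{(c+1) log K}` combines them into
`e^{(c+1) log K}/(c(c+1))`, which is the claimed value because `u² - iu = -c(c+1)`. -/

lemma integral_exp_mul_mul_call_payoff_eq_integral_Ioi_log {K : ℝ} (hK : 0 < K) (c : ℂ) :
    ∫ s : ℝ, Complex.exp (c * s) * ((max (Real.exp s - K) 0 : ℝ) : ℂ)
      = ∫ s in Ioi (Real.log K), (Complex.exp ((c + 1) * s) - K * Complex.exp (c * s)) := by
  rw [← setIntegral_eq_integral_of_forall_compl_eq_zero (s := Ioi (Real.log K))]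
  · refine setIntegral_congr_fun measurableSet_Ioi fun s hs => ?_
    have hKs : K < Real.exp s := (Real.log_lt_iff_lt_exp hK).1 hs
    rw [max_eq_left (sub_nonneg.2 hKs.le), add_mul, one_mul, Complex.exp_add]
    push_cast
    ring
  · intro s hs
    have hsK : Real.exp s ≤ K := (Real.le_log_iff_exp_le hK).1 (not_lt.1 hs)
    simp [max_eq_right (sub_nonpos.2 hsK)]

lemma ofReal_mul_exp_mul_log {K : ℝ} (hK : 0 < K) (c : ℂ) :
    (K : ℂ) * Complex.exp (c * Real.log K) = Complex.exp ((c + 1) * Real.log K) := by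
  rw [add_mul, one_mul, Complex.exp_add, ← Complex.ofReal_exp, Real.exp_log hK, mul_comm]

lemma integral_Ioi_log_exp_sub_mul_exp {K : ℝ} (hK : 0 < K) {c : ℂ} (hc : c.re < -1) :
    ∫ s in Ioi (Real.log K), (Complex.exp ((c + 1) * s) - K * Complex.exp (c * s))
      = Complex.exp ((c + 1) * Real.log K) / (c * (c + 1)) := by
  have hc1 : (c + 1).re < 0 := by rw [Complex.add_re, Complex.one_re]; linarith
  have hc0 : c.re < 0 := by linarith
  have hc1ne : c + 1 ≠ 0 := fun h => by simp [h] at hc1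
  have hcne : c ≠ 0 := fun h => by simp [h] at hc0
  rw [integral_sub (integrableOn_exp_mul_complex_Ioi hc1 _)
      ((integrableOn_exp_mul_complex_Ioi hc0 _).const_mul _), integral_const_mul,
    integral_exp_mul_complex_Ioi hc1, integral_exp_mul_complex_Ioi hc0]
  simp only [neg_div, mul_neg, mul_div_assoc', ofReal_mul_exp_mul_log hK]
  field_simp
  ring

/-- Fourier transform of the call payoff `s ↦ max (e^s - K) 0` for `Im u > 1`. -/
theorem call_payoff_fourier_transform (K : ℝ) (hK : 0 < K) (u : ℂ) (hu : 1 < u.im) :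
    (∫ s : ℝ, Complex.exp (Complex.I * u * s) * ((max (Real.exp s - K) 0 : ℝ) : ℂ))
      = - Complex.exp ((Complex.I * u + 1) * (Real.log K : ℂ)) / (u ^ 2 - Complex.I * u) ∧
    (∫ s in Ioi (Real.log K),
        (Complex.exp ((Complex.I * u + 1) * (s : ℂ)) - (K : ℂ) * Complex.exp (Complex.I * u * s)))
      = - Complex.exp ((Complex.I * u + 1) * (Real.log K : ℂ)) / (u ^ 2 - Complex.I * u) := by
  have hre : (Complex.I * u).re < -1 := by
    simp only [Complex.mul_re, Complex.I_re, Complex.I_im]; linarith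
  have hdenom : u ^ 2 - Complex.I * u = -(Complex.I * u * (Complex.I * u + 1)) := by
    ring_nf; rw [Complex.I_sq]; ring
  have hIoi := integral_Ioi_log_exp_sub_mul_exp hK hre
  rw [hdenom, div_neg, neg_div, neg_neg]
  exact ⟨(integral_exp_mul_mul_call_payoff_eq_integral_Ioi_log hK _).trans hIoi, hIoi⟩
end

section
/- Let L₀ > 0, K > 0 and σ̄ > 0 be real numbers, and let Z be a standard normal random variable. Then E[max(L₀·exp(σ̄·Z − σ̄²/2) − K, 0)] = L₀·Φ(d₁) − K·Φ(d₂), where d₁ = (ln(L₀/K) + σ̄²/2)/σ̄ and d₂ = d₁ − σ̄. (This is the Black caplet pricing formula: in the paper's notation, a forward-LIBOR rate that is lognormal with mean L₀ and integrated squared volatility σ̄² has caplet value L_i(t)Φ(d₁) − LΦ(d₂) per unit of accrual and discount.) -/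
open MeasureTheory ProbabilityTheory Set
open scoped ENNReal NNReal

/-- The standard normal cumulative distribution function. -/
noncomputable def stdNormalCDF (x : ℝ) : ℝ :=
  (Real.sqrt (2 * Real.pi))⁻¹ * ∫ t in Iic x, Real.exp (-t ^ 2 / 2)

lemma phi_integrable : Integrable (fun z : ℝ => Real.exp (-z ^ 2 / 2)) := by
  have := integrable_exp_neg_mul_sq (b := (1/2 : ℝ)) (by norm_num)
  convert this using 2 with x
  ring_nf

lemma phi_integrable_shift (σ : ℝ) : Integrable (fun z : ℝ => Real.exp (-(z - σ) ^ 2 / 2)) :=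
  phi_integrable.comp_sub_right σ

lemma gauss_int (a : ℝ) :
    ∫ z in Ioi a, Real.exp (-z ^ 2 / 2) = ∫ t in Iic (-a), Real.exp (-t ^ 2 / 2) := by
  have := integral_comp_neg_Iic (-a) (fun t : ℝ => Real.exp (-t ^ 2 / 2))
  rw [neg_neg] at this
  rw [← this]
  congr 1 with t
  ring_nf

lemma gauss_shift (σ a : ℝ) :
    ∫ z in Ioi a, Real.exp (-(z - σ) ^ 2 / 2) = ∫ z in Ioi (a - σ), Real.exp (-z ^ 2 / 2) := by
  rw [← integral_indicator measurableSet_Ioi, ← integral_indicator measurableSet_Ioi,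
    ← integral_add_right_eq_self (fun x => (Ioi a).indicator (fun z => Real.exp (-(z - σ) ^ 2 / 2)) x) σ]
  congr 1 with x
  by_cases h : a - σ < x
  · rw [indicator_of_mem (by simp only [mem_Ioi]; linarith),
      indicator_of_mem (by simp only [mem_Ioi]; linarith), add_sub_cancel_right]
  · rw [indicator_of_notMem (by simp only [mem_Ioi]; push_neg at h ⊢; linarith),
      indicator_of_notMem (by simp only [mem_Ioi]; push_neg at h ⊢; linarith)]


/-- Black caplet formula: for a lognormal rate `L₀ · exp(σ̄ Z − σ̄²/2)` with `Z` standard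
normal, the expected call payoff equals `L₀ Φ(d₁) − K Φ(d₂)`. -/
theorem black_caplet_formula (L₀ K σ : ℝ) (hL : 0 < L₀) (hK : 0 < K) (hσ : 0 < σ) :
    (∫ z, max (L₀ * Real.exp (σ * z - σ ^ 2 / 2) - K) 0 ∂(gaussianReal 0 1))
      = L₀ * stdNormalCDF ((Real.log (L₀ / K) + σ ^ 2 / 2) / σ)
        - K * stdNormalCDF ((Real.log (L₀ / K) + σ ^ 2 / 2) / σ - σ) := by
  set φc : ℝ := (Real.sqrt (2 * Real.pi))⁻¹ with hφc
  set c : ℝ := (σ ^ 2 / 2 - Real.log (L₀ / K)) / σ with hc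
  -- step 1: to Lebesgue
  have h1 : (∫ z, max (L₀ * Real.exp (σ * z - σ ^ 2 / 2) - K) 0 ∂(gaussianReal 0 1))
      = ∫ z, gaussianPDFReal 0 1 z * max (L₀ * Real.exp (σ * z - σ ^ 2 / 2) - K) 0 := by
    rw [gaussianReal_of_var_ne_zero 0 one_ne_zero]
    have hd : (gaussianPDF 0 1) = fun x => ((gaussianPDFReal 0 1 x).toNNReal : ℝ≥0∞) := by
      ext x; simp [gaussianPDF, ENNReal.ofReal]
    rw [hd, integral_withDensity_eq_integral_smul
      ((measurable_gaussianPDFReal 0 1).real_toNNReal)]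
    congr 1 with z
    simp [NNReal.smul_def, Real.coe_toNNReal _ (gaussianPDFReal_nonneg 0 1 z)]
  have hpdf : ∀ z : ℝ, gaussianPDFReal 0 1 z = φc * Real.exp (-z ^ 2 / 2) := by
    intro z
    simp only [gaussianPDFReal, NNReal.coe_one, mul_one, sub_zero, hφc]
  -- step 2: indicator form
  have key : ∀ z : ℝ, (L₀ * Real.exp (σ * z - σ ^ 2 / 2) - K ≤ 0 ↔ z ≤ c) := by
    intro z
    have hE : L₀ * Real.exp (σ * z - σ ^ 2 / 2)
        = Real.exp (Real.log L₀ + (σ * z - σ ^ 2 / 2)) := by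
      rw [Real.exp_add, Real.exp_log hL]
    rw [sub_nonpos, hE, ← Real.exp_log hK, Real.exp_le_exp, hc, le_div_iff₀ hσ]
    have hlog : Real.log (L₀ / K) = Real.log L₀ - Real.log K := Real.log_div hL.ne' hK.ne'
    rw [hlog]
    constructor <;> intro h <;> nlinarith
  have h2 : ∀ z : ℝ, max (L₀ * Real.exp (σ * z - σ ^ 2 / 2) - K) 0
      = (Ioi c).indicator (fun z => L₀ * Real.exp (σ * z - σ ^ 2 / 2) - K) z := by
    intro z
    by_cases h : z ∈ Ioi c
    · rw [indicator_of_mem h, max_eq_left]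
      by_contra hcon
      push_neg at hcon
      exact absurd ((key z).1 hcon.le) (not_le.2 (mem_Ioi.1 h))
    · rw [indicator_of_notMem h, max_eq_right ((key z).2 (le_of_not_gt (by simpa using h)))]
  rw [h1]
  have h3 : (∫ z, gaussianPDFReal 0 1 z * max (L₀ * Real.exp (σ * z - σ ^ 2 / 2) - K) 0)
      = ∫ z in Ioi c,
          (L₀ * (φc * Real.exp (-(z - σ) ^ 2 / 2)) - K * (φc * Real.exp (-z ^ 2 / 2))) := by
    rw [← integral_indicator measurableSet_Ioi]
    congr 1 with z
    rw [hpdf z, h2 z]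
    by_cases h : z ∈ Ioi c
    · rw [indicator_of_mem h, indicator_of_mem h]
      have e1 : Real.exp (-z ^ 2 / 2) * Real.exp (σ * z - σ ^ 2 / 2)
          = Real.exp (-(z - σ) ^ 2 / 2) := by
        rw [← Real.exp_add]; congr 1; ring
      linear_combination (L₀ * φc) * e1
    · rw [indicator_of_notMem h, indicator_of_notMem h, mul_zero]
  rw [h3, integral_sub
      (((phi_integrable_shift σ).const_mul φc).const_mul L₀).integrableOn
      ((phi_integrable.const_mul φc).const_mul K).integrableOn,
    integral_const_mul, integral_const_mul, integral_const_mul, integral_const_mul,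
    gauss_shift, gauss_int, gauss_int]
  have e1 : -(c - σ) = (Real.log (L₀ / K) + σ ^ 2 / 2) / σ := by
    rw [hc]; field_simp; ring
  have e2 : -c = (Real.log (L₀ / K) + σ ^ 2 / 2) / σ - σ := by
    rw [hc]; field_simp; ring
  rw [stdNormalCDF, stdNormalCDF, ← e2, ← e1]
end

section
/- Let S > 0, K > 0, σ > 0, T > 0 and r ∈ ℝ, and let Z be a standard normal random variable. Then the discounted expected call payoff under the lognormal (Black–Scholes–Merton) model satisfies e^{−rT}·E[max(S·exp((r − σ²/2)T + σ√T·Z) − K, 0)] = S·Φ(d₁) − K·e^{−rT}·Φ(d₂), where d₁ = (ln(S/K) + (r + σ²/2)T)/(σ√T) and d₂ = d₁ − σ√T. -/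
open MeasureTheory ProbabilityTheory Set
open scoped ENNReal NNReal

lemma integral_gaussianReal_std (g : ℝ → ℝ) :
    ∫ z, g z ∂(gaussianReal 0 1) =
      (Real.sqrt (2 * Real.pi))⁻¹ * ∫ z, g z * Real.exp (-z ^ 2 / 2) := by
  rw [gaussianReal_of_var_ne_zero 0 one_ne_zero]
  have hmeas : Measurable fun x => (gaussianPDFReal 0 1 x).toNNReal :=
    (measurable_gaussianPDFReal 0 1).real_toNNReal
  have hpdf : gaussianPDF 0 1 = fun x => ((gaussianPDFReal 0 1 x).toNNReal : ℝ≥0∞) := by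
    ext x; simp [gaussianPDF, ENNReal.ofReal]
  rw [hpdf, integral_withDensity_eq_integral_smul hmeas]
  rw [← integral_const_mul]
  congr 1; ext z
  have h0 : 0 ≤ gaussianPDFReal 0 1 z := gaussianPDFReal_nonneg 0 1 z
  simp only [NNReal.smul_def, Real.coe_toNNReal _ h0, smul_eq_mul]
  rw [gaussianPDFReal]
  push_cast
  ring_nf

lemma integrable_exp_shift (b : ℝ) :
    Integrable (fun z : ℝ => Real.exp (b * z) * Real.exp (-z ^ 2 / 2)) := by
  have h : ∀ z : ℝ, Real.exp (b * z) * Real.exp (-z ^ 2 / 2)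
      = Real.exp (b ^ 2 / 2) * Real.exp (-(1/2 : ℝ) * (z - b) ^ 2) := by
    intro z; rw [← Real.exp_add, ← Real.exp_add]; ring_nf
  simp_rw [h]
  exact ((integrable_exp_neg_mul_sq (by norm_num : (0:ℝ) < 1/2)).comp_sub_right b).const_mul _

lemma key_integral (b c : ℝ) :
    ∫ z in Ici c, Real.exp (b * z) * Real.exp (-z ^ 2 / 2)
      = Real.exp (b ^ 2 / 2) * ∫ t in Iic (b - c), Real.exp (-t ^ 2 / 2) := by
  have h : ∀ z : ℝ, Real.exp (b * z) * Real.exp (-z ^ 2 / 2)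
      = Real.exp (b ^ 2 / 2) * Real.exp (-(z - b) ^ 2 / 2) := by
    intro z; rw [← Real.exp_add, ← Real.exp_add]; ring_nf
  simp_rw [h, integral_const_mul]
  congr 1
  have htrans : ∫ z in Ici c, Real.exp (-(z - b) ^ 2 / 2)
      = ∫ u in Ici (c - b), Real.exp (-u ^ 2 / 2) := by
    have : ∀ z : ℝ, (Ici c).indicator (fun z => Real.exp (-(z - b) ^ 2 / 2)) z
        = (Ici (c - b)).indicator (fun u => Real.exp (-u ^ 2 / 2)) (z + -b) := by
      intro z
      by_cases hz : z ∈ Ici c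
      · rw [indicator_of_mem hz,
          indicator_of_mem (by simpa using (by linarith [hz.out] : c - b ≤ z + -b))]
        ring_nf
      · rw [indicator_of_notMem hz, indicator_of_notMem]
        intro h'; exact hz (by simpa using (by linarith [h'.out] : c ≤ z))
    rw [← integral_indicator measurableSet_Ici, ← integral_indicator measurableSet_Ici]
    simp_rw [this]
    exact integral_add_right_eq_self _ (-b)
  rw [htrans, integral_Ici_eq_integral_Ioi]
  calc ∫ u in Ioi (c - b), Real.exp (-u ^ 2 / 2)
      = ∫ u in Ioi (c - b), (fun t => Real.exp (-t ^ 2 / 2)) (-u) := by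
        apply setIntegral_congr_fun measurableSet_Ioi; intro u _; simp [neg_pow]
    _ = ∫ t in Iic (-(c - b)), Real.exp (-t ^ 2 / 2) :=
        integral_comp_neg_Ioi (c - b) (fun t => Real.exp (-t ^ 2 / 2))
    _ = ∫ t in Iic (b - c), Real.exp (-t ^ 2 / 2) := by rw [neg_sub]

/-- Black–Scholes–Merton formula. -/
theorem black_scholes_merton_call (S K σ T r : ℝ) (hS : 0 < S) (hK : 0 < K) (hσ : 0 < σ)
    (hT : 0 < T) :
    Real.exp (-r * T) *
        (∫ z, max (S * Real.exp ((r - σ ^ 2 / 2) * T + σ * Real.sqrt T * z) - K) 0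
          ∂(gaussianReal 0 1))
      = S * stdNormalCDF ((Real.log (S / K) + (r + σ ^ 2 / 2) * T) / (σ * Real.sqrt T))
        - K * Real.exp (-r * T) *
            stdNormalCDF ((Real.log (S / K) + (r + σ ^ 2 / 2) * T) / (σ * Real.sqrt T)
              - σ * Real.sqrt T) := by
  set b := σ * Real.sqrt T with hbdef
  set a := (r - σ ^ 2 / 2) * T with hadef
  have hb : 0 < b := mul_pos hσ (Real.sqrt_pos.2 hT)
  have hb2 : b ^ 2 = σ ^ 2 * T := by
    rw [hbdef, mul_pow, Real.sq_sqrt hT.le]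
  set z₀ := (Real.log (K / S) - a) / b with hz₀def
  -- pointwise description of the payoff
  have hmax : ∀ z : ℝ,
      max (S * Real.exp (a + b * z) - K) 0 * Real.exp (-z ^ 2 / 2)
        = (Ici z₀).indicator
            (fun z => (S * Real.exp (a + b * z) - K) * Real.exp (-z ^ 2 / 2)) z := by
    intro z
    have hiff : z₀ ≤ z ↔ 0 ≤ S * Real.exp (a + b * z) - K := by
      rw [hz₀def, div_le_iff₀ hb, sub_le_iff_le_add, Real.log_le_iff_le_exp (div_pos hK hS),
        div_le_iff₀ hS, sub_nonneg, add_comm (z * b) a, mul_comm, mul_comm z b]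
    by_cases hz : z ∈ Ici z₀
    · rw [indicator_of_mem hz, max_eq_left (hiff.mp hz)]
    · rw [indicator_of_notMem hz]
      have h0 : S * Real.exp (a + b * z) - K ≤ 0 := by
        by_contra hcon
        push_neg at hcon
        exact hz (hiff.mpr hcon.le)
      rw [max_eq_right h0, zero_mul]
  rw [integral_gaussianReal_std]
  simp only [hmax]
  rw [integral_indicator measurableSet_Ici]
  have hsplit : ∀ z : ℝ, (S * Real.exp (a + b * z) - K) * Real.exp (-z ^ 2 / 2)
      = S * Real.exp a * (Real.exp (b * z) * Real.exp (-z ^ 2 / 2))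
        - K * (Real.exp (0 * z) * Real.exp (-z ^ 2 / 2)) := by
    intro z; simp [Real.exp_add]; ring
  rw [setIntegral_congr_fun measurableSet_Ici (fun z _ => hsplit z),
    integral_sub (((integrable_exp_shift b).const_mul _).integrableOn)
      (((integrable_exp_shift 0).const_mul _).integrableOn),
    integral_const_mul, integral_const_mul, key_integral, key_integral]
  simp only [ne_eq, OfNat.ofNat_ne_zero, not_false_eq_true, zero_pow, zero_div,
    Real.exp_zero, one_mul, zero_sub]
  have hlog : Real.log (K / S) = -Real.log (S / K) := by
    rw [← Real.log_inv, inv_div]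
  have hd1 : (Real.log (S / K) + (r + σ ^ 2 / 2) * T) / b = b - z₀ := by
    rw [div_eq_iff hb.ne']
    have h : (b - z₀) * b = Real.log (S / K) + (r + σ ^ 2 / 2) * T := by
      rw [hz₀def, hlog, hadef, sub_mul, div_mul_cancel₀ _ hb.ne']
      linear_combination hb2
    exact h.symm
  have hd2 : (Real.log (S / K) + (r + σ ^ 2 / 2) * T) / b - b = -z₀ := by
    rw [hd1]; ring
  rw [stdNormalCDF, stdNormalCDF, hd2, hd1]
  have hexp : Real.exp (-r * T) * (Real.exp a * Real.exp (b ^ 2 / 2)) = 1 := by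
    rw [← Real.exp_add, ← Real.exp_add, hadef, hb2,
      show -r * T + ((r - σ ^ 2 / 2) * T + σ ^ 2 * T / 2) = 0 by ring, Real.exp_zero]
  set C := (Real.sqrt (2 * Real.pi))⁻¹ with hC
  set I₁ := ∫ t in Iic (b - z₀), Real.exp (-t ^ 2 / 2) with hI₁
  set I₂ := ∫ t in Iic (-z₀), Real.exp (-t ^ 2 / 2) with hI₂
  linear_combination (S * C * I₁) * hexp
end

section
/- Fix K > 0, σ > 0, τ > 0 and r ∈ ℝ, and define the Black–Scholes call price as a function of the spot S > 0 by C(S) = S·Φ(d₁(S)) − K·e^{−rτ}·Φ(d₂(S)), where d₁(S) = (ln(S/K) + (r + σ²/2)τ)/(σ√τ) and d₂(S) = d₁(S) − σ√τ. Then for every S > 0 the derivative function S ↦ Φ(d₁(S)) is itself differentiable at S with derivative φ_N(d₁(S))/(S·σ·√τ); that is, the gamma of a European call equals N′(d₁)/(Sσ√τ). -/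
open Set

/-- The standard normal probability density function. -/
noncomputable def stdNormalPDF (x : ℝ) : ℝ :=
  (Real.sqrt (2 * Real.pi))⁻¹ * Real.exp (-x ^ 2 / 2)

open MeasureTheory

theorem hasDerivAt_integral_Iic {E : Type*} [NormedAddCommGroup E] [NormedSpace ℝ E]
    [CompleteSpace E] {f : ℝ → E} {x : ℝ} (hf : Integrable f) (hx : ContinuousAt f x) :
    HasDerivAt (fun u => ∫ t in Iic u, f t) (f x) x := by
  have hsplit : (fun u => ∫ t in Iic u, f t) =
      fun u => (∫ t in Iic 0, f t) + ∫ t in (0 : ℝ)..u, f t := by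
    funext u
    rw [← intervalIntegral.integral_Iic_sub_Iic hf.integrableOn hf.integrableOn,
      add_sub_cancel]
  rw [hsplit]
  exact (intervalIntegral.integral_hasDerivAt_right hf.intervalIntegrable
    hf.aestronglyMeasurable.stronglyMeasurableAtFilter hx).const_add _

theorem integrable_exp_neg_sq_div_two : Integrable fun t : ℝ => Real.exp (-t ^ 2 / 2) := by
  convert integrable_exp_neg_mul_sq (b := (1 / 2 : ℝ)) (by norm_num) using 2 with t
  ring_nf

theorem hasDerivAt_stdNormalCDF (x : ℝ) : HasDerivAt stdNormalCDF (stdNormalPDF x) x :=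
  (hasDerivAt_integral_Iic integrable_exp_neg_sq_div_two
    (by fun_prop : Continuous fun t : ℝ => Real.exp (-t ^ 2 / 2)).continuousAt).const_mul _

theorem hasDerivAt_log_div_const {K S : ℝ} (hK : K ≠ 0) (hS : S ≠ 0) :
    HasDerivAt (fun s => Real.log (s / K)) S⁻¹ S := by
  refine ((Real.hasDerivAt_log (div_ne_zero hS hK)).comp S ((hasDerivAt_id S).div_const K)
    ).congr_deriv ?_
  field_simp

theorem black_scholes_gamma_general (K σ τ r : ℝ) (hK : 0 < K)
    (S : ℝ) (hS : 0 < S) :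
    HasDerivAt
      (fun s : ℝ =>
        stdNormalCDF ((Real.log (s / K) + (r + σ ^ 2 / 2) * τ) / (σ * Real.sqrt τ)))
      (stdNormalPDF ((Real.log (S / K) + (r + σ ^ 2 / 2) * τ) / (σ * Real.sqrt τ))
        / (S * σ * Real.sqrt τ)) S := by
  have hd₁ := ((hasDerivAt_log_div_const hK.ne' hS.ne').add_const
    ((r + σ ^ 2 / 2) * τ)).div_const (σ * Real.sqrt τ)
  refine ((hasDerivAt_stdNormalCDF _).comp S hd₁).congr_deriv ?_
  ring

/-- Gamma of a European call: the derivative of the delta `S ↦ Φ(d₁(S))` with respect to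
the spot `S` equals `φ_N(d₁(S)) / (S σ √τ)`. -/
theorem black_scholes_gamma (K σ τ r : ℝ) (hK : 0 < K) (hσ : 0 < σ) (hτ : 0 < τ)
    (S : ℝ) (hS : 0 < S) :
    HasDerivAt
      (fun s : ℝ =>
        stdNormalCDF ((Real.log (s / K) + (r + σ ^ 2 / 2) * τ) / (σ * Real.sqrt τ)))
      (stdNormalPDF ((Real.log (S / K) + (r + σ ^ 2 / 2) * τ) / (σ * Real.sqrt τ))
        / (S * σ * Real.sqrt τ)) S :=
  black_scholes_gamma_general K σ τ r hK S hS
end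

section
/- Bromwich inversion formula for the tail probability: let X be a real random variable with law having density f ≥ 0 with respect to Lebesgue measure, let a > 0, and define M(t) = ∫_ℝ e^{tx} f(x) dx for complex t with Re(t) = a, assuming ∫_ℝ e^{ax} f(x) dx < ∞. Assume moreover that s ↦ M(a + is) is Lebesgue integrable on ℝ and that the inversion formula f(u) = (1/(2π))·∫_ℝ M(a + is)·e^{−(a+is)u} ds holds for all u ∈ ℝ. Then for every x ∈ ℝ, the tail probability satisfies P(X > x) = ∫_x^∞ f(u) du = (1/(2π))·∫_ℝ M(a + is)·e^{−(a+is)x}/(a + is) ds. -/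
/-!
Substitute the inversion formula for `f` into `∫_x^∞ f` and swap the two integrals: on
`(x, ∞) × ℝ` the integrand is dominated by `e^{-au} |M(a + is)|`, which is integrable because
`a > 0`. The inner integral is then `∫_x^∞ e^{-(a+is)u} du = e^{-(a+is)x} / (a + is)`.
-/

open MeasureTheory Set

theorem integral_Ioi_cexp_neg_mul {c : ℂ} (hc : 0 < c.re) (x : ℝ) :
    ∫ u : ℝ in Ioi x, Complex.exp (-c * u) = Complex.exp (-c * x) / c := by
  rw [integral_exp_mul_complex_Ioi (by simpa using hc), neg_div_neg_eq]

theorem toReal_measure_preimage_eq_setIntegral_of_map_eq_withDensity {Ω : Type*}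
    [MeasurableSpace Ω] {μ : Measure Ω} {X : Ω → ℝ} (hX : Measurable X) {f : ℝ → ℝ}
    (hf_nonneg : ∀ x, 0 ≤ f x) (hf_meas : Measurable f)
    (hlaw : μ.map X = volume.withDensity (fun x => ENNReal.ofReal (f x)))
    {s : Set ℝ} (hs : MeasurableSet s) :
    (μ (X ⁻¹' s)).toReal = ∫ u in s, f u := by
  rw [← Measure.map_apply hX hs, hlaw, withDensity_apply _ hs,
    integral_eq_lintegral_of_nonneg_ae (.of_forall hf_nonneg)
      hf_meas.aestronglyMeasurable.restrict]

section Fubini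

variable {β : Type*} [MeasurableSpace β] {μ : Measure β} {g : β → ℂ}
  {c : β → ℂ} {a : ℝ}

theorem integrable_prod_mul_cexp_neg_mul (hg : Integrable g μ) (hc_meas : Measurable c)
    (hc : ∀ s, (c s).re = a) (ha : 0 < a) (x : ℝ) :
    Integrable (fun p : ℝ × β => g p.2 * Complex.exp (-c p.2 * p.1))
      ((volume.restrict (Ioi x)).prod μ) := by
  have hmeas : AEStronglyMeasurable (fun p : ℝ × β => g p.2 * Complex.exp (-c p.2 * p.1))
      ((volume.restrict (Ioi x)).prod μ) :=
    hg.aestronglyMeasurable.comp_snd.mul (by fun_prop : Measurable fun p : ℝ × β =>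
      Complex.exp (-c p.2 * p.1)).aestronglyMeasurable
  refine ((exp_neg_integrableOn_Ioi x ha).mul_prod hg.norm).mono' hmeas (.of_forall ?_)
  rintro ⟨u, s⟩
  simp [Complex.norm_exp, hc, mul_comm]

theorem setIntegral_Ioi_integral_mul_cexp_neg_mul [SFinite μ] (hg : Integrable g μ)
    (hc_meas : Measurable c) (hc : ∀ s, (c s).re = a) (ha : 0 < a) (x : ℝ) :
    ∫ u in Ioi x, ∫ s, g s * Complex.exp (-c s * u) ∂μ =
      ∫ s, g s * Complex.exp (-c s * x) / c s ∂μ := by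
  rw [integral_integral_swap (integrable_prod_mul_cexp_neg_mul hg hc_meas hc ha x)]
  refine integral_congr_ae (.of_forall fun s => ?_)
  dsimp only
  rw [integral_const_mul, integral_Ioi_cexp_neg_mul (by rw [hc]; exact ha), mul_div_assoc]

end Fubini

theorem bromwich_tail_probability_general {Ω : Type*} [MeasurableSpace Ω] (ℙ : Measure Ω)
    (X : Ω → ℝ) (hX : Measurable X)
    (f : ℝ → ℝ) (hf_nonneg : ∀ x, 0 ≤ f x) (hf_meas : Measurable f)
    (hlaw : ℙ.map X = volume.withDensity (fun x => ENNReal.ofReal (f x)))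
    (a : ℝ) (ha : 0 < a) (M : ℂ → ℂ)
    (hM_int : Integrable (fun s : ℝ => M ((a : ℂ) + (s : ℂ) * Complex.I)))
    (hInv : ∀ u : ℝ, (f u : ℂ) = (1 / (2 * (Real.pi : ℂ))) *
      ∫ s : ℝ, M ((a : ℂ) + (s : ℂ) * Complex.I) *
        Complex.exp (-((a : ℂ) + (s : ℂ) * Complex.I) * (u : ℂ)))
    (x : ℝ) :
    (ℙ {ω | x < X ω}).toReal = ∫ u in Ioi x, f u ∧
    ((∫ u in Ioi x, f u : ℝ) : ℂ) = (1 / (2 * (Real.pi : ℂ))) *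
      ∫ s : ℝ, M ((a : ℂ) + (s : ℂ) * Complex.I) *
        Complex.exp (-((a : ℂ) + (s : ℂ) * Complex.I) * (x : ℂ))
          / ((a : ℂ) + (s : ℂ) * Complex.I) := by
  refine ⟨toReal_measure_preimage_eq_setIntegral_of_map_eq_withDensity hX hf_nonneg hf_meas
    hlaw measurableSet_Ioi, ?_⟩
  have hc_re : ∀ s : ℝ, ((a : ℂ) + (s : ℂ) * Complex.I).re = a := by simp
  rw [← integral_complex_ofReal, setIntegral_congr_fun measurableSet_Ioi fun u _ => hInv u,
    integral_const_mul, setIntegral_Ioi_integral_mul_cexp_neg_mul hM_int (by fun_prop) hc_re ha]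

/-- Bromwich inversion formula for the tail probability
`P(X > x) = ∫_x^∞ f = (1/2π) ∫_ℝ M(a+is) e^{-(a+is)x}/(a+is) ds`. -/
theorem bromwich_tail_probability {Ω : Type*} [MeasurableSpace Ω] (ℙ : Measure Ω)
    [IsProbabilityMeasure ℙ] (X : Ω → ℝ) (hX : Measurable X)
    (f : ℝ → ℝ) (hf_nonneg : ∀ x, 0 ≤ f x) (hf_meas : Measurable f)
    (hlaw : ℙ.map X = volume.withDensity (fun x => ENNReal.ofReal (f x)))
    (a : ℝ) (ha : 0 < a) (M : ℂ → ℂ)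
    (hM : ∀ t : ℂ, t.re = a → M t = ∫ x : ℝ, Complex.exp (t * x) * (f x : ℂ))
    (hInt_a : Integrable (fun x : ℝ => Real.exp (a * x) * f x))
    (hM_int : Integrable (fun s : ℝ => M ((a : ℂ) + (s : ℂ) * Complex.I)))
    (hInv : ∀ u : ℝ, (f u : ℂ) = (1 / (2 * (Real.pi : ℂ))) *
      ∫ s : ℝ, M ((a : ℂ) + (s : ℂ) * Complex.I) *
        Complex.exp (-((a : ℂ) + (s : ℂ) * Complex.I) * (u : ℂ)))
    (x : ℝ) :
    (ℙ {ω | x < X ω}).toReal = ∫ u in Ioi x, f u ∧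
    ((∫ u in Ioi x, f u : ℝ) : ℂ) = (1 / (2 * (Real.pi : ℂ))) *
      ∫ s : ℝ, M ((a : ℂ) + (s : ℂ) * Complex.I) *
        Complex.exp (-((a : ℂ) + (s : ℂ) * Complex.I) * (x : ℂ))
          / ((a : ℂ) + (s : ℂ) * Complex.I) :=
  bromwich_tail_probability_general ℙ X hX f hf_nonneg hf_meas hlaw a ha M hM_int hInv x
end

section
/- Bromwich inversion formula for the expected shortfall: let X be a real random variable with law having density f ≥ 0 with respect to Lebesgue measure, let a > 0, and define M(t) = ∫_ℝ e^{tx} f(x) dx for complex t with Re(t) = a, assuming ∫_ℝ e^{ax} f(x) dx < ∞. Assume that s ↦ M(a + is) is Lebesgue integrable on ℝ and that the inversion formula f(u) = (1/(2π))·∫_ℝ M(a + is)·e^{−(a+is)u} ds holds for all u ∈ ℝ. Then for every x ∈ ℝ, ∫_x^∞ u·f(u) du = x·P(X > x) + (1/(2π))·∫_ℝ M(a + is)·e^{−(a+is)x}/(a + is)² ds; consequently, if P(X > x) > 0, the conditional expectation satisfies E[X | X > x] = x + (1/P(X > x))·(1/(2π))·∫_ℝ M(a + is)·e^{−(a+is)x}/(a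 + is)² ds. -/
/-! Substituting the inversion formula for `f` and exchanging the order of integration, the
excess `∫_x^∞ (u - x) f(u) du` becomes `(1/2π) ∫ M(a+is) ∫_x^∞ (u - x) e^{-(a+is)u} du ds`, and for
`Re t > 0` the inner integral `∫_x^∞ (u - x) e^{-tu} du` equals `e^{-tx}/t²`. Fubini applies because
`|e^{-(a+is)u}| = e^{-au}` does not depend on `s`, so the integrand is dominated by the product of
`(u - x) e^{-au}` on `(x, ∞)` and `|M(a+is)|` on `ℝ`, both integrable. -/

open MeasureTheory Set Filter Topology
open scoped Complex Real

lemma tendsto_sub_mul_exp_neg_atTop {b : ℝ} (hb : 0 < b) (x : ℝ) :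
    Tendsto (fun u : ℝ => (u - x) * rexp (-(b * u))) atTop (𝓝 0) := by
  have hexp := Real.tendsto_exp_neg_atTop_nhds_zero.comp (tendsto_id.const_mul_atTop hb)
  have hmul := tendsto_rpow_mul_exp_neg_mul_atTop_nhds_zero 1 b hb
  simpa [sub_mul, neg_mul] using hmul.sub (hexp.const_mul x)

lemma integrableOn_Ioi_sub_mul_exp_neg {b : ℝ} (hb : 0 < b) (x : ℝ) :
    IntegrableOn (fun u : ℝ => (u - x) * rexp (-(b * u))) (Ioi x) := by
  refine integrable_of_isBigO_exp_neg (half_pos hb) (by fun_prop) ?_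
  have hbdd := (tendsto_sub_mul_exp_neg_atTop (half_pos hb) x).isBigO_one ℝ
  refine (hbdd.mul (Asymptotics.isBigO_refl (fun u => rexp (-(b / 2 * u))) atTop)).congr
    (fun u => ?_) (fun u => ?_)
  · rw [mul_assoc, ← Real.exp_add]; ring_nf
  · simp [neg_mul]

lemma norm_ofReal_sub_ofReal {x u : ℝ} (h : x ≤ u) : ‖(u : ℂ) - x‖ = u - x := by
  rw [← Complex.ofReal_sub, Complex.norm_real, Real.norm_of_nonneg (sub_nonneg.2 h)]

lemma integrableOn_Ioi_norm_sub_mul_exp_neg {b : ℝ} (hb : 0 < b) (x : ℝ) :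
    IntegrableOn (fun u : ℝ => ‖(u : ℂ) - x‖ * rexp (-(b * u))) (Ioi x) := by
  refine (integrableOn_Ioi_sub_mul_exp_neg hb x).congr_fun (fun u hu => ?_) measurableSet_Ioi
  rw [norm_ofReal_sub_ofReal (le_of_lt hu)]

lemma norm_cexp_neg_mul_ofReal (t : ℂ) (u : ℝ) : ‖cexp (-t * u)‖ = rexp (-(t.re * u)) := by
  simp [Complex.norm_exp]

lemma tendsto_cexp_neg_mul_atTop {t : ℂ} (ht : 0 < t.re) :
    Tendsto (fun u : ℝ => cexp (-t * u)) atTop (𝓝 0) := by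
  rw [Complex.tendsto_exp_nhds_zero_iff]
  simpa using tendsto_id.const_mul_atTop ht

lemma tendsto_sub_mul_cexp_neg_atTop {t : ℂ} (ht : 0 < t.re) (x : ℝ) :
    Tendsto (fun u : ℝ => ((u : ℂ) - x) * cexp (-t * u)) atTop (𝓝 0) := by
  refine squeeze_zero_norm' ?_ (tendsto_sub_mul_exp_neg_atTop ht x)
  filter_upwards [eventually_ge_atTop x] with u hu
  rw [norm_mul, norm_ofReal_sub_ofReal hu, norm_cexp_neg_mul_ofReal]

lemma integral_Ioi_sub_mul_cexp_neg {t : ℂ} (ht : 0 < t.re) (x : ℝ) :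
    ∫ u in Ioi x, ((u : ℂ) - x) * cexp (-t * u) = cexp (-t * x) / t ^ 2 := by
  have ht0 : t ≠ 0 := fun h => by simp [h] at ht
  have hderiv : ∀ u : ℝ, HasDerivAt (fun u : ℝ => -cexp (-t * u) * ((u - x) / t + 1 / t ^ 2))
      (((u : ℂ) - x) * cexp (-t * u)) u := by
    intro u
    have h := ((((hasDerivAt_id (u : ℂ)).const_mul (-t)).cexp.neg).mul
      ((((hasDerivAt_id (u : ℂ)).sub_const (x : ℂ)).div_const t).add_const (1 / t ^ 2))).comp_ofReal
    refine h.congr_deriv ?_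
    simp only [id, mul_one, Pi.neg_apply, neg_mul]
    field_simp
    ring
  have hint : IntegrableOn (fun u : ℝ => ((u : ℂ) - x) * cexp (-t * u)) (Ioi x) :=
    (integrableOn_Ioi_norm_sub_mul_exp_neg ht x).mono' (by fun_prop)
      (ae_of_all _ fun u => by rw [norm_mul, norm_cexp_neg_mul_ofReal])
  have hlim : Tendsto (fun u : ℝ => -cexp (-t * u) * ((u - x) / t + 1 / t ^ 2)) atTop (𝓝 0) := by
    have h := ((tendsto_sub_mul_cexp_neg_atTop ht x).div_const t).add
      ((tendsto_cexp_neg_mul_atTop ht).div_const (t ^ 2))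
    refine Tendsto.congr (fun u => ?_) (by simpa using h.neg)
    simp only [neg_mul]
    ring
  rw [integral_Ioi_of_hasDerivAt_of_tendsto' (fun u _ => hderiv u) hint hlim]
  simp [div_eq_mul_inv]

section Bromwich

open Complex (I)

variable {a : ℝ} {φ : ℝ → ℂ}

lemma integrable_prod_mul_mul_cexp {S : Set ℝ} {w : ℝ → ℂ} (hw : Continuous w)
    (hwS : IntegrableOn (fun u => ‖w u‖ * rexp (-(a * u))) S) (hφ : Integrable φ) :
    Integrable (Function.uncurry fun u s : ℝ => w u * (φ s * cexp (-(a + s * I) * u)))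
      ((volume.restrict S).prod volume) := by
  refine (hwS.mul_prod hφ.norm).mono' ?_ (ae_of_all _ fun ⟨u, s⟩ => ?_)
  · exact (hw.comp continuous_fst).aestronglyMeasurable.mul
      (hφ.aestronglyMeasurable.comp_snd.mul (Continuous.aestronglyMeasurable (by fun_prop)))
  · rw [Function.uncurry_apply_pair, norm_mul, norm_mul, norm_cexp_neg_mul_ofReal]
    simp only [Complex.add_re, Complex.ofReal_re, Complex.mul_re, Complex.I_re, Complex.I_im,
      Complex.ofReal_im, mul_zero, zero_mul, sub_zero, add_zero]
    exact le_of_eq (by ring)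

lemma integrableOn_mul_integral_mul_cexp {S : Set ℝ} {w : ℝ → ℂ} (hw : Continuous w)
    (hwS : IntegrableOn (fun u => ‖w u‖ * rexp (-(a * u))) S) (hφ : Integrable φ) :
    IntegrableOn (fun u => w u * ∫ s, φ s * cexp (-(a + s * I) * u)) S := by
  simpa only [IntegrableOn, Function.uncurry_apply_pair, integral_const_mul] using
    (integrable_prod_mul_mul_cexp hw hwS hφ).integral_prod_left

lemma integral_Ioi_sub_mul_integral_mul_cexp (ha : 0 < a) (hφ : Integrable φ) (x : ℝ) :
    ∫ u in Ioi x, ((u : ℂ) - x) * ∫ s, φ s * cexp (-(a + s * I) * u)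
      = ∫ s, φ s * cexp (-(a + s * I) * x) / (a + s * I) ^ 2 := by
  simp_rw [← integral_const_mul]
  rw [integral_integral_swap (integrable_prod_mul_mul_cexp (by fun_prop)
    (integrableOn_Ioi_norm_sub_mul_exp_neg ha x) hφ)]
  refine integral_congr_ae (ae_of_all _ fun s => ?_)
  simp_rw [mul_left_comm _ (φ s), integral_const_mul]
  rw [integral_Ioi_sub_mul_cexp_neg (by simpa using ha) x, mul_div_assoc]

end Bromwich

theorem bromwich_expected_shortfall_general
    (f : ℝ → ℝ) (a : ℝ) (ha : 0 < a) (M : ℂ → ℂ)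
    (hM_int : Integrable (fun s : ℝ => M ((a : ℂ) + (s : ℂ) * Complex.I)))
    (hInv : ∀ u : ℝ, (f u : ℂ) = (1 / (2 * (Real.pi : ℂ))) *
      ∫ s : ℝ, M ((a : ℂ) + (s : ℂ) * Complex.I) *
        Complex.exp (-((a : ℂ) + (s : ℂ) * Complex.I) * (u : ℂ)))
    (x : ℝ) :
    ((∫ u in Ioi x, u * f u : ℝ) : ℂ)
      = (x : ℂ) * ((∫ u in Ioi x, f u : ℝ) : ℂ) + (1 / (2 * (Real.pi : ℂ))) *
          ∫ s : ℝ, M ((a : ℂ) + (s : ℂ) * Complex.I) *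
            Complex.exp (-((a : ℂ) + (s : ℂ) * Complex.I) * (x : ℂ))
              / ((a : ℂ) + (s : ℂ) * Complex.I) ^ 2 ∧
    (0 < ∫ u in Ioi x, f u →
      (((∫ u in Ioi x, f u)⁻¹ * ∫ u in Ioi x, u * f u : ℝ) : ℂ)
        = (x : ℂ) + ((∫ u in Ioi x, f u : ℝ) : ℂ)⁻¹ * ((1 / (2 * (Real.pi : ℂ))) *
            ∫ s : ℝ, M ((a : ℂ) + (s : ℂ) * Complex.I) *
              Complex.exp (-((a : ℂ) + (s : ℂ) * Complex.I) * (x : ℂ))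
                / ((a : ℂ) + (s : ℂ) * Complex.I) ^ 2)) := by
  set c : ℂ := 1 / (2 * (Real.pi : ℂ))
  set J : ℂ := ∫ s : ℝ, M (a + s * Complex.I) * cexp (-(a + s * Complex.I) * x) /
    (a + s * Complex.I) ^ 2
  have hf_int : IntegrableOn (fun u : ℝ => (f u : ℂ)) (Ioi x) := by
    have := (integrableOn_mul_integral_mul_cexp (w := 1) continuous_const
      (by simpa using exp_neg_integrableOn_Ioi x ha) hM_int).const_mul c
    simp_rw [hInv]
    simpa only [IntegrableOn, Pi.one_apply, one_mul] using this
  have hsub_int : IntegrableOn (fun u : ℝ => ((u : ℂ) - x) * f u) (Ioi x) := by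
    have := (integrableOn_mul_integral_mul_cexp (by fun_prop)
      (integrableOn_Ioi_norm_sub_mul_exp_neg ha x) hM_int).const_mul c
    simp_rw [hInv, mul_left_comm _ c]
    exact this
  have hexcess : ∫ u in Ioi x, ((u : ℂ) - x) * f u = c * J := by
    simp_rw [hInv, mul_left_comm _ c]
    rw [integral_const_mul, integral_Ioi_sub_mul_integral_mul_cexp ha hM_int]
  have hmain : ((∫ u in Ioi x, u * f u : ℝ) : ℂ) = x * ((∫ u in Ioi x, f u : ℝ) : ℂ) + c * J := by
    rw [← integral_complex_ofReal, ← integral_complex_ofReal, ← integral_const_mul, ← hexcess,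
      ← integral_add (hf_int.const_mul x) hsub_int]
    push_cast
    congr! 2 with u
    ring
  refine ⟨hmain, fun hpos => ?_⟩
  have hmass : ((∫ u in Ioi x, f u : ℝ) : ℂ) ≠ 0 := Complex.ofReal_ne_zero.2 hpos.ne'
  rw [Complex.ofReal_mul, hmain, Complex.ofReal_inv, mul_add, mul_comm (x : ℂ),
    inv_mul_cancel_left₀ hmass]

/-- Bromwich inversion formula for the expected shortfall:
`∫_x^∞ u f(u) du = x P(X > x) + (1/2π) ∫_ℝ M(a+is) e^{-(a+is)x}/(a+is)² ds`, and hence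
`E[X | X > x] = x + (1/P(X > x)) (1/2π) ∫_ℝ M(a+is) e^{-(a+is)x}/(a+is)² ds`. -/
theorem bromwich_expected_shortfall {Ω : Type*} [MeasurableSpace Ω] (ℙ : Measure Ω)
    [IsProbabilityMeasure ℙ] (X : Ω → ℝ) (hX : Measurable X)
    (f : ℝ → ℝ) (hf_nonneg : ∀ x, 0 ≤ f x) (hf_meas : Measurable f)
    (hlaw : ℙ.map X = volume.withDensity (fun x => ENNReal.ofReal (f x)))
    (a : ℝ) (ha : 0 < a) (M : ℂ → ℂ)
    (hM : ∀ t : ℂ, t.re = a → M t = ∫ x : ℝ, Complex.exp (t * x) * (f x : ℂ))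
    (hInt_a : Integrable (fun x : ℝ => Real.exp (a * x) * f x))
    (hM_int : Integrable (fun s : ℝ => M ((a : ℂ) + (s : ℂ) * Complex.I)))
    (hInv : ∀ u : ℝ, (f u : ℂ) = (1 / (2 * (Real.pi : ℂ))) *
      ∫ s : ℝ, M ((a : ℂ) + (s : ℂ) * Complex.I) *
        Complex.exp (-((a : ℂ) + (s : ℂ) * Complex.I) * (u : ℂ)))
    (x : ℝ) :
    ((∫ u in Ioi x, u * f u : ℝ) : ℂ)
      = (x : ℂ) * ((∫ u in Ioi x, f u : ℝ) : ℂ) + (1 / (2 * (Real.pi : ℂ))) *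
          ∫ s : ℝ, M ((a : ℂ) + (s : ℂ) * Complex.I) *
            Complex.exp (-((a : ℂ) + (s : ℂ) * Complex.I) * (x : ℂ))
              / ((a : ℂ) + (s : ℂ) * Complex.I) ^ 2 ∧
    (0 < ∫ u in Ioi x, f u →
      (((∫ u in Ioi x, f u)⁻¹ * ∫ u in Ioi x, u * f u : ℝ) : ℂ)
        = (x : ℂ) + ((∫ u in Ioi x, f u : ℝ) : ℂ)⁻¹ * ((1 / (2 * (Real.pi : ℂ))) *
            ∫ s : ℝ, M ((a : ℂ) + (s : ℂ) * Complex.I) *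
              Complex.exp (-((a : ℂ) + (s : ℂ) * Complex.I) * (x : ℂ))
                / ((a : ℂ) + (s : ℂ) * Complex.I) ^ 2)) :=
  bromwich_expected_shortfall_general f a ha M hM_int hInv x
end

section
/- One step of the Lundberg induction: let μ be a Borel probability measure on [0, ∞) (the claim-size distribution), and let λ > 0, c > 0 and κ > 0 satisfy ∫_{[0,∞)} e^{κx} dμ(x) < ∞ and λ·∫_{[0,∞)} e^{κx} dμ(x) = λ + κc (the adjustment-coefficient equation). Let ψₙ : [0, ∞) → ℝ be measurable with 0 ≤ ψₙ(y) ≤ e^{−κy} for all y ≥ 0, and define ψₙ₊₁(u) = ∫_0^∞ ( μ((u + ct, ∞)) + ∫_{[0, u+ct]} ψₙ(u + ct − x) dμ(x) )·λ·e^{−λt} dt for u ≥ 0. Then ψₙ₊₁(u) ≤ e^{−κu} for all u ≥ 0. -/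
/-!
Bound the inner bracket pointwise: with `v = u + ct`, both `1_{x > v}` and `ψ(v - x) 1_{x ≤ v}`
are dominated by `e^{-κ(v - x)}`, so the bracket is at most `e^{-κv} ∫ e^{κx} dμ`. Integrating
this against the exponential waiting-time density gives
`e^{-κu} · (λ ∫ e^{κx} dμ) / (λ + κc)`, which is `e^{-κu}` by the adjustment-coefficient equation.
-/

open MeasureTheory Set Real

section ClaimBound

variable {μ : Measure ℝ} {κ v : ℝ}

lemma measureReal_Ioi_le_setIntegral_exp [IsFiniteMeasure μ] (hκ : 0 ≤ κ)
    (hint : IntegrableOn (fun x => exp (-κ * (v - x))) (Ioi v) μ) :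
    μ.real (Ioi v) ≤ ∫ x in Ioi v, exp (-κ * (v - x)) ∂μ := by
  rw [← setIntegral_one_eq_measureReal]
  refine setIntegral_mono_on (integrableOn_const (measure_ne_top μ _)) hint measurableSet_Ioi
    fun x hx => one_le_exp ?_
  nlinarith [mem_Ioi.mp hx]

lemma setIntegral_Icc_comp_sub_le {ψ : ℝ → ℝ} (hψ_meas : Measurable ψ)
    (hψ_nonneg : ∀ y, 0 ≤ y → 0 ≤ ψ y) (hψ_le : ∀ y, 0 ≤ y → ψ y ≤ exp (-κ * y))
    (hint : IntegrableOn (fun x => exp (-κ * (v - x))) (Icc 0 v) μ) :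
    ∫ x in Icc 0 v, ψ (v - x) ∂μ ≤ ∫ x in Icc 0 v, exp (-κ * (v - x)) ∂μ := by
  have hle : ∀ x ∈ Icc 0 v, ψ (v - x) ≤ exp (-κ * (v - x)) := fun x hx =>
    hψ_le _ (sub_nonneg.mpr hx.2)
  have hψ_int : IntegrableOn (fun x => ψ (v - x)) (Icc 0 v) μ := by
    refine hint.mono' (hψ_meas.comp (measurable_const.sub measurable_id)).aestronglyMeasurable
      ((ae_restrict_iff' measurableSet_Icc).mpr (Filter.Eventually.of_forall fun x hx => ?_))
    rw [norm_of_nonneg (hψ_nonneg _ (sub_nonneg.mpr hx.2))]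
    exact hle x hx
  exact setIntegral_mono_on hψ_int hint measurableSet_Icc hle

lemma measureReal_Ioi_add_setIntegral_Icc_le [IsFiniteMeasure μ] (hκ : 0 ≤ κ)
    (hInt : IntegrableOn (fun x => exp (κ * x)) (Ici 0) μ) {ψ : ℝ → ℝ} (hψ_meas : Measurable ψ)
    (hψ_nonneg : ∀ y, 0 ≤ y → 0 ≤ ψ y) (hψ_le : ∀ y, 0 ≤ y → ψ y ≤ exp (-κ * y)) (hv : 0 ≤ v) :
    μ.real (Ioi v) + ∫ x in Icc 0 v, ψ (v - x) ∂μ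
      ≤ exp (-κ * v) * ∫ x in Ici 0, exp (κ * x) ∂μ := by
  have hsplit : ∀ x, exp (-κ * (v - x)) = exp (-κ * v) * exp (κ * x) := fun x => by
    rw [← exp_add]; ring_nf
  have hint : IntegrableOn (fun x => exp (-κ * (v - x))) (Ici 0) μ := by
    rw [funext hsplit]
    exact hInt.const_mul _
  have hIoi := hint.mono_set (Ioi_subset_Ici hv)
  have hIcc := hint.mono_set (Icc_subset_Ici_self : Icc 0 v ⊆ Ici 0)
  calc μ.real (Ioi v) + ∫ x in Icc 0 v, ψ (v - x) ∂μ
      ≤ (∫ x in Ioi v, exp (-κ * (v - x)) ∂μ) + ∫ x in Icc 0 v, exp (-κ * (v - x)) ∂μ :=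
        add_le_add (measureReal_Ioi_le_setIntegral_exp hκ hIoi)
          (setIntegral_Icc_comp_sub_le hψ_meas hψ_nonneg hψ_le hIcc)
    _ = ∫ x in Ici 0, exp (-κ * (v - x)) ∂μ := by
        rw [add_comm, ← setIntegral_union ((Iic_disjoint_Ioi le_rfl).mono_left Icc_subset_Iic_self)
          measurableSet_Ioi hIcc hIoi, Icc_union_Ioi_eq_Ici hv]
    _ = exp (-κ * v) * ∫ x in Ici 0, exp (κ * x) ∂μ := by
        simp only [hsplit, integral_const_mul]

end ClaimBound

section Laplace

variable {lam κ c u : ℝ}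

lemma exp_neg_mul_add_mul_mul_exp (t : ℝ) :
    exp (-κ * (u + c * t)) * (lam * exp (-lam * t))
      = exp (-κ * u) * lam * exp (-(lam + κ * c) * t) := by
  have hexp : -κ * (u + c * t) + -lam * t = -κ * u + -(lam + κ * c) * t := by ring
  rw [mul_left_comm, ← exp_add, hexp, exp_add]; ring

lemma integrableOn_Ioi_exp_neg_mul_add_mul_mul_exp (h : 0 < lam + κ * c) :
    IntegrableOn (fun t => exp (-κ * (u + c * t)) * (lam * exp (-lam * t))) (Ioi 0) := by
  simp only [exp_neg_mul_add_mul_mul_exp]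
  exact (integrableOn_exp_mul_Ioi (neg_lt_zero.mpr h) 0).const_mul _

lemma integral_Ioi_exp_neg_mul_add_mul_mul_exp (h : 0 < lam + κ * c) :
    ∫ t in Ioi 0, exp (-κ * (u + c * t)) * (lam * exp (-lam * t))
      = exp (-κ * u) * (lam / (lam + κ * c)) := by
  simp only [exp_neg_mul_add_mul_mul_exp]
  rw [integral_const_mul, integral_exp_mul_Ioi (neg_lt_zero.mpr h), mul_zero, exp_zero]
  field_simp

end Laplace

theorem lundberg_induction_step_general (μ : Measure ℝ) [IsProbabilityMeasure μ]
    (lam c κ : ℝ) (hlam : 0 < lam) (hc : 0 < c) (hκ : 0 < κ)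
    (hInt : IntegrableOn (fun x => Real.exp (κ * x)) (Ici 0) μ)
    (hAdj : lam * ∫ x in Ici 0, Real.exp (κ * x) ∂μ = lam + κ * c)
    (ψ : ℝ → ℝ) (hψ_meas : Measurable ψ)
    (hψ_nonneg : ∀ y, 0 ≤ y → 0 ≤ ψ y) (hψ_le : ∀ y, 0 ≤ y → ψ y ≤ Real.exp (-κ * y))
    (u : ℝ) (hu : 0 ≤ u) :
    (∫ t in Ioi (0 : ℝ),
        ((μ (Ioi (u + c * t))).toReal + ∫ x in Icc 0 (u + c * t), ψ (u + c * t - x) ∂μ)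
          * (lam * Real.exp (-lam * t)))
      ≤ Real.exp (-κ * u) := by
  set M := ∫ x in Ici 0, exp (κ * x) ∂μ
  have hrate : 0 < lam + κ * c := by positivity
  have hdensity : ∀ t, 0 ≤ lam * exp (-lam * t) := fun t => by positivity
  calc _ ≤ ∫ t in Ioi 0, M * (exp (-κ * (u + c * t)) * (lam * exp (-lam * t))) := by
        refine integral_mono_of_nonneg (Filter.Eventually.of_forall fun t => ?_)
          ((integrableOn_Ioi_exp_neg_mul_add_mul_mul_exp hrate).const_mul M)
          ((ae_restrict_iff' measurableSet_Ioi).mpr (Filter.Eventually.of_forall fun t ht => ?_))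
        · exact mul_nonneg (add_nonneg ENNReal.toReal_nonneg (setIntegral_nonneg measurableSet_Icc
            fun x hx => hψ_nonneg _ (sub_nonneg.mpr hx.2))) (hdensity t)
        · have hv : 0 ≤ u + c * t := add_nonneg hu (mul_nonneg hc.le (le_of_lt ht))
          have hbracket := measureReal_Ioi_add_setIntegral_Icc_le hκ.le hInt hψ_meas hψ_nonneg
            hψ_le hv
          rw [measureReal_def] at hbracket
          calc _ ≤ exp (-κ * (u + c * t)) * M * (lam * exp (-lam * t)) :=
                mul_le_mul_of_nonneg_right hbracket (hdensity t)
            _ = _ := by ring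
    _ = exp (-κ * u) * (lam * M / (lam + κ * c)) := by
        rw [integral_const_mul, integral_Ioi_exp_neg_mul_add_mul_mul_exp hrate]; ring
    _ = exp (-κ * u) := by rw [hAdj, div_self hrate.ne', mul_one]

/-- One step of the Lundberg induction: if `0 ≤ ψₙ ≤ e^{-κ·}` on `[0, ∞)` and the
adjustment-coefficient equation `λ ∫ e^{κx} dμ = λ + κc` holds, then the next iterate of
the ruin recursion also satisfies `ψₙ₊₁(u) ≤ e^{-κu}`. -/
theorem lundberg_induction_step (μ : Measure ℝ) [IsProbabilityMeasure μ]
    (hsupp : μ (Iio 0) = 0) (lam c κ : ℝ) (hlam : 0 < lam) (hc : 0 < c) (hκ : 0 < κ)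
    (hInt : IntegrableOn (fun x => Real.exp (κ * x)) (Ici 0) μ)
    (hAdj : lam * ∫ x in Ici 0, Real.exp (κ * x) ∂μ = lam + κ * c)
    (ψ : ℝ → ℝ) (hψ_meas : Measurable ψ)
    (hψ_nonneg : ∀ y, 0 ≤ y → 0 ≤ ψ y) (hψ_le : ∀ y, 0 ≤ y → ψ y ≤ Real.exp (-κ * y))
    (u : ℝ) (hu : 0 ≤ u) :
    (∫ t in Ioi (0 : ℝ),
        ((μ (Ioi (u + c * t))).toReal + ∫ x in Icc 0 (u + c * t), ψ (u + c * t - x) ∂μ)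
          * (lam * Real.exp (-lam * t)))
      ≤ Real.exp (-κ * u) :=
  lundberg_induction_step_general μ lam c κ hlam hc hκ hInt hAdj ψ hψ_meas hψ_nonneg hψ_le u hu
end

section
/- Lundberg's inequality: let μ be a Borel probability measure on [0, ∞), and let λ > 0, c > 0 and κ > 0 satisfy ∫_{[0,∞)} e^{κx} dμ(x) < ∞ and λ·∫_{[0,∞)} e^{κx} dμ(x) = λ + κc. Define the sequence of functions ψₙ : [0, ∞) → ℝ by ψ₀ = 0 and ψₙ₊₁(u) = ∫_0^∞ ( μ((u + ct, ∞)) + ∫_{[0, u+ct]} ψₙ(u + ct − x) dμ(x) )·λ·e^{−λt} dt. Then for every n ≥ 0 and every u ≥ 0 one has 0 ≤ ψₙ(u) ≤ e^{−κu}; consequently, if for some function ψ : [0, ∞) → ℝ the pointwise limit ψ(u) = limₙ ψₙ(u) exists for all u ≥ 0, then the ruin probability satisfies ψ(u) ≤ e^{−κu} for all u ≥ 0, and in particular ψ(u) → 0 as u → ∞. -/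
/-!
`ψₙ₊₁(u)` conditions on the first claim time `t ~ Exp(λ)` and the first claim `x ~ μ`, at which
the surplus is `s - x` with `s = u + ct`. If `0 ≤ ψₙ(v) ≤ e^{-κv}`, then both the ruin term
`μ(s, ∞)` and the continuation `∫_{[0,s]} ψₙ(s - x) dμ` are dominated by `∫ e^{-κs} e^{κx} dμ`
over their ranges, so their sum is at most `e^{-κs} M_X(κ)`. Integrating against `λe^{-λt}` gives
`e^{-κu} λ M_X(κ) / (λ + κc)`, which is `e^{-κu}` by the Lundberg equation. Induction on `n`
bounds every `ψₙ`, and the bound passes to pointwise limits.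
-/

open MeasureTheory Set Filter

namespace Lundberg

def IsLundbergBounded (κ : ℝ) (f : ℝ → ℝ) : Prop :=
  ∀ u, 0 ≤ u → 0 ≤ f u ∧ f u ≤ Real.exp (-κ * u)

noncomputable def ruinStep (μ : Measure ℝ) (lam c : ℝ) (f : ℝ → ℝ) (u : ℝ) : ℝ :=
  ∫ t in Ioi (0 : ℝ),
    (μ.real (Ioi (u + c * t)) + ∫ x in Icc 0 (u + c * t), f (u + c * t - x) ∂μ)
      * (lam * Real.exp (-lam * t))

variable {μ : Measure ℝ} {κ : ℝ} {f : ℝ → ℝ}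

theorem measureReal_Ioi_le_exp_mul_setIntegral [IsFiniteMeasure μ] (hκ : 0 ≤ κ) {s : ℝ}
    (hInt : IntegrableOn (fun x => Real.exp (κ * x)) (Ioi s) μ) :
    μ.real (Ioi s) ≤ Real.exp (-κ * s) * ∫ x in Ioi s, Real.exp (κ * x) ∂μ := by
  rw [← integral_const_mul]
  calc μ.real (Ioi s) = ∫ _ in Ioi s, (1 : ℝ) ∂μ := by simp
    _ ≤ _ := by
      refine setIntegral_mono_on (integrableOn_const (measure_ne_top μ _))
        (hInt.const_mul _) measurableSet_Ioi fun x (hx : s < x) => ?_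
      rw [← Real.exp_add]
      exact Real.one_le_exp (by nlinarith)

theorem setIntegral_Icc_comp_sub_le (hf : IsLundbergBounded κ f) {s : ℝ}
    (hInt : IntegrableOn (fun x => Real.exp (κ * x)) (Icc 0 s) μ) :
    ∫ x in Icc 0 s, f (s - x) ∂μ ≤ Real.exp (-κ * s) * ∫ x in Icc 0 s, Real.exp (κ * x) ∂μ := by
  rw [← integral_const_mul]
  refine integral_mono_of_nonneg ?_ (hInt.const_mul _) ?_ <;>
    refine (ae_restrict_iff' measurableSet_Icc).2 (ae_of_all _ fun x hx => ?_)
  · exact (hf (s - x) (by linarith [hx.2])).1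
  · calc f (s - x) ≤ Real.exp (-κ * (s - x)) := (hf (s - x) (by linarith [hx.2])).2
      _ = Real.exp (-κ * s) * Real.exp (κ * x) := by rw [← Real.exp_add]; ring_nf

theorem measureReal_Ioi_add_setIntegral_le [IsFiniteMeasure μ] (hκ : 0 ≤ κ)
    (hf : IsLundbergBounded κ f) (hInt : IntegrableOn (fun x => Real.exp (κ * x)) (Ici 0) μ)
    {s : ℝ} (hs : 0 ≤ s) :
    μ.real (Ioi s) + ∫ x in Icc 0 s, f (s - x) ∂μ ≤
      Real.exp (-κ * s) * ∫ x in Ici 0, Real.exp (κ * x) ∂μ := by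
  have hIoi := hInt.mono_set (Ioi_subset_Ici hs)
  have hIcc := hInt.mono_set (Icc_subset_Ici_self : Icc 0 s ⊆ Ici 0)
  rw [← Icc_union_Ioi_eq_Ici hs, setIntegral_union ((Iic_disjoint_Ioi le_rfl).mono_left Icc_subset_Iic_self) measurableSet_Ioi
    hIcc hIoi, mul_add]
  linarith [measureReal_Ioi_le_exp_mul_setIntegral hκ hIoi,
    setIntegral_Icc_comp_sub_le (μ := μ) hf hIcc]

theorem integral_Ioi_exp_neg_mul {b : ℝ} (hb : 0 < b) :
    ∫ t in Ioi (0 : ℝ), Real.exp (-b * t) = b⁻¹ := by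
  simpa using integral_exp_mul_Ioi (neg_neg_of_pos hb) 0

theorem ruinStep_isLundbergBounded [IsFiniteMeasure μ] {lam c : ℝ} (hlam : 0 < lam)
    (hc : 0 ≤ c) (hκ : 0 ≤ κ) (hInt : IntegrableOn (fun x => Real.exp (κ * x)) (Ici 0) μ)
    (hAdj : lam * ∫ x in Ici 0, Real.exp (κ * x) ∂μ = lam + κ * c)
    (hf : IsLundbergBounded κ f) : IsLundbergBounded κ (ruinStep μ lam c f) := by
  intro u hu
  set M := ∫ x in Ici 0, Real.exp (κ * x) ∂μ
  have hb : 0 < κ * c + lam := by positivity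
  have hs : ∀ t ∈ Ioi (0 : ℝ), 0 ≤ u + c * t := fun t (ht : 0 < t) => by positivity
  have hnonneg : ∀ t ∈ Ioi (0 : ℝ), 0 ≤
      (μ.real (Ioi (u + c * t)) + ∫ x in Icc 0 (u + c * t), f (u + c * t - x) ∂μ)
        * (lam * Real.exp (-lam * t)) := fun t ht => by
    have : 0 ≤ ∫ x in Icc 0 (u + c * t), f (u + c * t - x) ∂μ :=
      setIntegral_nonneg measurableSet_Icc fun x hx => (hf _ (by linarith [hx.2])).1
    positivity
  have hdom : ∀ t ∈ Ioi (0 : ℝ),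
      (μ.real (Ioi (u + c * t)) + ∫ x in Icc 0 (u + c * t), f (u + c * t - x) ∂μ)
        * (lam * Real.exp (-lam * t)) ≤
      M * lam * Real.exp (-κ * u) * Real.exp (-(κ * c + lam) * t) := fun t ht => by
    calc _ ≤ (Real.exp (-κ * (u + c * t)) * M) * (lam * Real.exp (-lam * t)) := by
          gcongr
          exact measureReal_Ioi_add_setIntegral_le hκ hf hInt (hs t ht)
      _ = _ := by
          rw [show -(κ * c + lam) * t = -κ * (c * t) + -lam * t by ring, Real.exp_add,
            show -κ * (u + c * t) = -κ * u + -κ * (c * t) by ring, Real.exp_add]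
          ring
  refine ⟨setIntegral_nonneg measurableSet_Ioi hnonneg, ?_⟩
  calc ruinStep μ lam c f u
      ≤ ∫ t in Ioi (0 : ℝ), M * lam * Real.exp (-κ * u) * Real.exp (-(κ * c + lam) * t) :=
        integral_mono_of_nonneg
          ((ae_restrict_iff' measurableSet_Ioi).2 (ae_of_all _ hnonneg))
          ((exp_neg_integrableOn_Ioi 0 hb).const_mul _)
          ((ae_restrict_iff' measurableSet_Ioi).2 (ae_of_all _ hdom))
    _ = lam * M * (κ * c + lam)⁻¹ * Real.exp (-κ * u) := by
        rw [integral_const_mul, integral_Ioi_exp_neg_mul hb]; ring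
    _ = Real.exp (-κ * u) := by
        rw [hAdj, add_comm lam, mul_inv_cancel₀ hb.ne', one_mul]

theorem IsLundbergBounded.of_tendsto {F : ℕ → ℝ → ℝ} {g : ℝ → ℝ}
    (hF : ∀ n, IsLundbergBounded κ (F n))
    (hlim : ∀ u, 0 ≤ u → Tendsto (fun n => F n u) atTop (nhds (g u))) :
    IsLundbergBounded κ g := fun u hu =>
  ⟨ge_of_tendsto' (hlim u hu) fun n => (hF n u hu).1,
    le_of_tendsto' (hlim u hu) fun n => (hF n u hu).2⟩

theorem IsLundbergBounded.tendsto_atTop_zero (hf : IsLundbergBounded κ f) (hκ : 0 < κ) :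
    Tendsto f atTop (nhds 0) := by
  have hexp : Tendsto (fun u => Real.exp (-κ * u)) atTop (nhds 0) :=
    Real.tendsto_exp_atBot.comp (tendsto_id.const_mul_atTop_of_neg (neg_neg_of_pos hκ))
  refine squeeze_zero' ?_ ?_ hexp <;>
    filter_upwards [eventually_ge_atTop 0] with u hu
  exacts [(hf u hu).1, (hf u hu).2]

end Lundberg

open Lundberg

theorem lundberg_inequality_general (μ : Measure ℝ) [IsProbabilityMeasure μ]
    (lam c κ : ℝ) (hlam : 0 < lam) (hc : 0 < c) (hκ : 0 < κ)
    (hInt : IntegrableOn (fun x => Real.exp (κ * x)) (Ici 0) μ)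
    (hAdj : lam * ∫ x in Ici 0, Real.exp (κ * x) ∂μ = lam + κ * c)
    (ψ : ℕ → ℝ → ℝ) (hψ0 : ∀ u, ψ 0 u = 0)
    (hψrec : ∀ n : ℕ, ∀ u : ℝ,
      ψ (n + 1) u = ∫ t in Ioi (0 : ℝ),
        ((μ (Ioi (u + c * t))).toReal + ∫ x in Icc 0 (u + c * t), ψ n (u + c * t - x) ∂μ)
          * (lam * Real.exp (-lam * t))) :
    (∀ n : ℕ, ∀ u : ℝ, 0 ≤ u → 0 ≤ ψ n u ∧ ψ n u ≤ Real.exp (-κ * u)) ∧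
    (∀ ψlim : ℝ → ℝ, (∀ u : ℝ, 0 ≤ u → Tendsto (fun n => ψ n u) atTop (nhds (ψlim u))) →
      (∀ u : ℝ, 0 ≤ u → ψlim u ≤ Real.exp (-κ * u)) ∧ Tendsto ψlim atTop (nhds 0)) := by
  have hbound : ∀ n, IsLundbergBounded κ (ψ n) := by
    intro n
    induction n with
    | zero => exact fun u _ => by simp [hψ0, (Real.exp_pos _).le]
    | succ n ih =>
      rw [show ψ (n + 1) = ruinStep μ lam c (ψ n) from funext (hψrec n)]
      exact ruinStep_isLundbergBounded hlam hc.le hκ.le hInt hAdj ih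
  refine ⟨hbound, fun ψlim hlim => ?_⟩
  have hψlim := IsLundbergBounded.of_tendsto hbound hlim
  exact ⟨fun u hu => (hψlim u hu).2, hψlim.tendsto_atTop_zero hκ⟩

/-- Lundberg's inequality: the ruin probabilities `ψₙ` of the Cramér–Lundberg model satisfy
`0 ≤ ψₙ(u) ≤ e^{-κu}`, hence any pointwise limit `ψ` satisfies `ψ(u) ≤ e^{-κu}` and
`ψ(u) → 0` as `u → ∞`. -/
theorem lundberg_inequality (μ : Measure ℝ) [IsProbabilityMeasure μ]
    (hsupp : μ (Iio 0) = 0) (lam c κ : ℝ) (hlam : 0 < lam) (hc : 0 < c) (hκ : 0 < κ)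
    (hInt : IntegrableOn (fun x => Real.exp (κ * x)) (Ici 0) μ)
    (hAdj : lam * ∫ x in Ici 0, Real.exp (κ * x) ∂μ = lam + κ * c)
    (ψ : ℕ → ℝ → ℝ) (hψ0 : ∀ u, ψ 0 u = 0)
    (hψrec : ∀ n : ℕ, ∀ u : ℝ,
      ψ (n + 1) u = ∫ t in Ioi (0 : ℝ),
        ((μ (Ioi (u + c * t))).toReal + ∫ x in Icc 0 (u + c * t), ψ n (u + c * t - x) ∂μ)
          * (lam * Real.exp (-lam * t))) :
    (∀ n : ℕ, ∀ u : ℝ, 0 ≤ u → 0 ≤ ψ n u ∧ ψ n u ≤ Real.exp (-κ * u)) ∧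
    (∀ ψlim : ℝ → ℝ, (∀ u : ℝ, 0 ≤ u → Tendsto (fun n => ψ n u) atTop (nhds (ψlim u))) →
      (∀ u : ℝ, 0 ≤ u → ψlim u ≤ Real.exp (-κ * u)) ∧ Tendsto ψlim atTop (nhds 0)) :=
  lundberg_inequality_general μ lam c κ hlam hc hκ hInt hAdj ψ hψ0 hψrec
end

section
/- Parseval/Plancherel pricing formula along a shifted contour: let K > 0, r ∈ ℝ, T ∈ ℝ, fix a real number u_i > 1, and let q : ℝ → ℝ be a probability density (q ≥ 0, ∫_ℝ q = 1) such that s ↦ e^{u_i·s}·q(s) is Lebesgue integrable. Define the generalized characteristic function q̂(z) = ∫_ℝ e^{izs}·q(s) ds for complex z with Im(z) = −u_i, and define Ĉ_T(u) = −K^{iu+1}/(u² − iu) for complex u with Im(u) = u_i, where K^{iu+1} = exp((iu+1)·log K). Assume the shifted inversion formula holds: for all s ∈ ℝ, q(s) = (1/(2π))·∫_ℝ e^{−i(u_r + i·u_i)s}·q̂(u_r + i·u_i) du_r. Then the discounted call price satisfies e^{−rT}·∫_ℝ max(e^s − K, 0)·q(s) ds = (e^{−rT}/(2π))·∫_ℝ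 Ĉ_T(u_r + i·u_i)·q̂(−(u_r + i·u_i)) du_r. -/
open MeasureTheory Set

/-!
Damping the call payoff by `e^{-u_i s}` makes it integrable, and its Fourier transform in the
convention `ω ↦ ∫ e^{iωs} f(s) ds` is `Ĉ_T(ω + i u_i)`, which decays like `1/ω²`. Fourier
inversion thus gives `max(e^s - K, 0) = (e^{u_i s}/2π) ∫ Ĉ_T(ω + i u_i) e^{-iωs} dω`, and
integrating against `q` and swapping the integrals (Fubini, against the integrable
`e^{u_i s} q(s)`) produces `q̂(-(ω + i u_i))` inside the `ω`-integral.
-/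

/-- The generalized characteristic function `q̂(z) = ∫ e^{izs} q(s) ds` of a density `q`. -/
noncomputable def genCharFun (q : ℝ → ℝ) (z : ℂ) : ℂ :=
  ∫ s : ℝ, Complex.exp (Complex.I * z * (s : ℂ)) * (q s : ℂ)

/-- The Fourier transform of the call payoff, `Ĉ_T(u) = -K^{iu+1}/(u² - iu)`. -/
noncomputable def callPayoffFT (K : ℝ) (u : ℂ) : ℂ :=
  -Complex.exp ((Complex.I * u + 1) * (Real.log K : ℂ)) / (u ^ 2 - Complex.I * u)

open scoped Real FourierTransform
open Complex (I)

theorem integral_mul_cexp_neg_eq_two_pi_mul {f g : ℝ → ℂ} (hf : Integrable f)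
    (hg : Integrable g) (hfg : ∀ ω : ℝ, ∫ t : ℝ, Complex.exp (I * ω * t) * f t = g ω) {s : ℝ}
    (hs : ContinuousAt f s) :
    ∫ ω : ℝ, g ω * Complex.exp (-I * ω * s) = 2 * π * f s := by
  have hfourier : 𝓕 f = fun ξ => g (-(2 * π) * ξ) := by
    ext ξ
    rw [Real.fourier_real_eq_integral_exp_smul, ← hfg]
    congr 1; ext t; rw [smul_eq_mul]; push_cast; ring_nf
  have hinv : 𝓕⁻ (𝓕 f) s = f s := hf.fourierInv_fourier_eq
    (by rw [hfourier]; exact hg.comp_mul_left' (neg_ne_zero.2 Real.two_pi_pos.ne')) hs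
  have hdilate :
      ∫ x : ℝ, g (-(2 * π) * x) * Complex.exp (-I * ↑(-(2 * π) * x) * s) = f s := by
    rw [← hinv, Real.fourierInv_eq_fourier_neg, Real.fourier_real_eq_integral_exp_smul, hfourier]
    congr 1; ext v; rw [smul_eq_mul, mul_comm]; push_cast; ring_nf
  have hscale := Measure.integral_comp_mul_left
    (fun ω => g ω * Complex.exp (-I * ω * s)) (-(2 * π))
  rw [hdilate, abs_inv, abs_neg, abs_of_pos Real.two_pi_pos] at hscale
  rw [hscale, Complex.real_smul, ← mul_assoc]
  push_cast
  rw [mul_inv_cancel₀ (by exact_mod_cast Real.two_pi_pos.ne'), one_mul]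

theorem integral_mul_integral_cexp_swap {F g : ℝ → ℂ} (hF : Integrable F) (hg : Integrable g) :
    ∫ ω : ℝ, F ω * ∫ s : ℝ, Complex.exp (-I * ω * s) * g s
      = ∫ s : ℝ, (∫ ω : ℝ, F ω * Complex.exp (-I * ω * s)) * g s := by
  have hprod : Integrable
      (fun p : ℝ × ℝ => F p.1 * (Complex.exp (-I * p.1 * p.2) * g p.2)) (volume.prod volume) := by
    refine (hF.norm.mul_prod hg.norm).mono' (hF.aestronglyMeasurable.comp_fst.mul
      ((by fun_prop : Continuous fun p : ℝ × ℝ => Complex.exp (-I * p.1 * p.2))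
        |>.aestronglyMeasurable.mul hg.aestronglyMeasurable.comp_snd))
      (Filter.Eventually.of_forall fun p => ?_)
    rw [norm_mul, norm_mul, Complex.norm_exp]
    simp
  calc ∫ ω : ℝ, F ω * ∫ s : ℝ, Complex.exp (-I * ω * s) * g s
      = ∫ ω : ℝ, ∫ s : ℝ, F ω * (Complex.exp (-I * ω * s) * g s) := by
        simp_rw [integral_const_mul]
    _ = ∫ s : ℝ, ∫ ω : ℝ, F ω * (Complex.exp (-I * ω * s) * g s) :=
        integral_integral_swap hprod
    _ = _ := by simp_rw [← mul_assoc, integral_mul_const]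

theorem callPayoff_mul_cexp_eq_indicator {K : ℝ} (hK : 0 < K) (u : ℂ) :
    (fun t : ℝ => ((max (Real.exp t - K) 0 : ℝ) : ℂ) * Complex.exp (I * u * t))
      = (Ioi (Real.log K)).indicator (fun t : ℝ =>
          Complex.exp ((I * u + 1) * t) - K * Complex.exp (I * u * t)) := by
  ext t
  have hsplit : Complex.exp ((I * u + 1) * t)
      = Real.exp t * Complex.exp (I * u * t) := by
    rw [add_mul, one_mul, Complex.exp_add, Complex.ofReal_exp, mul_comm]
  by_cases ht : t ∈ Ioi (Real.log K)
  · have hKt : K < Real.exp t := (Real.log_lt_iff_lt_exp hK).1 ht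
    rw [indicator_of_mem ht, max_eq_left (sub_nonneg.2 hKt.le), hsplit]
    push_cast
    ring
  · have hKt : Real.exp t ≤ K := (Real.le_log_iff_exp_le hK).1 (not_lt.1 ht)
    rw [indicator_of_notMem ht, max_eq_right (sub_nonpos.2 hKt)]
    simp

theorem integrable_callPayoff_mul_cexp {K : ℝ} (hK : 0 < K) {u : ℂ} (hu : 1 < u.im) :
    Integrable fun t : ℝ => ((max (Real.exp t - K) 0 : ℝ) : ℂ) * Complex.exp (I * u * t) := by
  rw [callPayoff_mul_cexp_eq_indicator hK, integrable_indicator_iff measurableSet_Ioi]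
  exact (integrableOn_exp_mul_complex_Ioi (by simp; linarith) _).sub
    ((integrableOn_exp_mul_complex_Ioi (by simp; linarith) _).const_mul _)

theorem integral_callPayoff_mul_cexp {K : ℝ} (hK : 0 < K) {u : ℂ} (hu : 1 < u.im) :
    ∫ t : ℝ, ((max (Real.exp t - K) 0 : ℝ) : ℂ) * Complex.exp (I * u * t)
      = callPayoffFT K u := by
  have h₁ : (I * u + 1).re < 0 := by simp; linarith
  have h₂ : (I * u).re < 0 := by simp; linarith
  have hlogK : Complex.exp ((I * u + 1) * Real.log K)
      = K * Complex.exp (I * u * Real.log K) := by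
    rw [add_mul, one_mul, Complex.exp_add, ← Complex.ofReal_exp, Real.exp_log hK, mul_comm]
  rw [callPayoff_mul_cexp_eq_indicator hK, integral_indicator measurableSet_Ioi,
    integral_sub (integrableOn_exp_mul_complex_Ioi h₁ _)
      ((integrableOn_exp_mul_complex_Ioi h₂ _).const_mul _),
    integral_const_mul, integral_exp_mul_complex_Ioi h₁, integral_exp_mul_complex_Ioi h₂,
    callPayoffFT, hlogK,
    show u ^ 2 - I * u = -(I * u * (I * u + 1)) by
      linear_combination u ^ 2 * Complex.I_sq]
  have : I * u + 1 ≠ 0 := fun h => by simp [h] at h₁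
  have hIu : I * u ≠ 0 := fun h => by simp [h] at h₂
  have : u ≠ 0 := right_ne_zero_of_mul hIu
  field_simp
  ring

theorem min_mul_one_add_sq_le_norm_sq_sub_I_mul {ur ui : ℝ} (hui : 1 / 2 ≤ ui) :
    min 1 ((ui - 1) ^ 2) * (1 + ur ^ 2)
      ≤ ‖((ur : ℂ) + I * ui) ^ 2 - I * ((ur : ℂ) + I * ui)‖ := by
  set u : ℂ := ur + I * ui
  have hu : ‖u‖ ^ 2 = ur ^ 2 + ui ^ 2 := by
    rw [Complex.sq_norm, show u = ur + ui * I by ring, Complex.normSq_add_mul_I]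
  have huI : ‖u - I‖ ^ 2 = ur ^ 2 + (ui - 1) ^ 2 := by
    rw [Complex.sq_norm, show u - I = ur + ((ui - 1 : ℝ) : ℂ) * I by
      push_cast; ring, Complex.normSq_add_mul_I]
  have hle : ‖u - I‖ ≤ ‖u‖ :=
    (sq_le_sq₀ (norm_nonneg _) (norm_nonneg _)).1 (by rw [hu, huI]; nlinarith)
  calc min 1 ((ui - 1) ^ 2) * (1 + ur ^ 2)
      ≤ ur ^ 2 + (ui - 1) ^ 2 := by
        nlinarith [min_le_left 1 ((ui - 1) ^ 2), min_le_right 1 ((ui - 1) ^ 2), sq_nonneg ur]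
    _ = ‖u - I‖ * ‖u - I‖ := by rw [← huI, sq]
    _ ≤ ‖u‖ * ‖u - I‖ := by gcongr
    _ = ‖u ^ 2 - I * u‖ := by rw [← norm_mul]; ring_nf

theorem norm_callPayoffFT_le (K : ℝ) {ur ui : ℝ} (hui : 1 < ui) :
    ‖callPayoffFT K ((ur : ℂ) + I * ui)‖
      ≤ Real.exp ((1 - ui) * Real.log K) / min 1 ((ui - 1) ^ 2) * (1 + ur ^ 2)⁻¹ := by
  have hnum : ‖Complex.exp ((I * (ur + I * ui) + 1) * Real.log K)‖
      = Real.exp ((1 - ui) * Real.log K) := by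
    rw [Complex.norm_exp, Complex.re_mul_ofReal]
    congr 2
    simp only [Complex.add_re, Complex.mul_re, Complex.I_re, Complex.I_im, Complex.add_im,
      Complex.ofReal_re, Complex.ofReal_im, Complex.mul_im, Complex.one_re]
    ring
  rw [callPayoffFT, norm_div, norm_neg, hnum, ← div_eq_mul_inv, div_div]
  gcongr
  exact min_mul_one_add_sq_le_norm_sq_sub_I_mul (by linarith)

theorem continuous_callPayoffFT_shift (K : ℝ) {ui : ℝ} (hui : 1 < ui) :
    Continuous fun ur : ℝ => callPayoffFT K ((ur : ℂ) + I * ui) := by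
  refine Continuous.div (by fun_prop) (by fun_prop) fun ur hzero => ?_
  have hbound := min_mul_one_add_sq_le_norm_sq_sub_I_mul (ur := ur) (by linarith : 1 / 2 ≤ ui)
  rw [hzero, norm_zero] at hbound
  have hm : 0 < min 1 ((ui - 1) ^ 2) := lt_min one_pos (by nlinarith)
  nlinarith [sq_nonneg ur]

theorem integrable_callPayoffFT_shift (K : ℝ) {ui : ℝ} (hui : 1 < ui) :
    Integrable fun ur : ℝ => callPayoffFT K ((ur : ℂ) + I * ui) :=
  (integrable_inv_one_add_sq.const_mul _).mono'
    (continuous_callPayoffFT_shift K hui).aestronglyMeasurable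
    (Filter.Eventually.of_forall fun _ => norm_callPayoffFT_le K hui)

theorem integral_callPayoffFT_shift_mul_cexp {K : ℝ} (hK : 0 < K) {ui : ℝ} (hui : 1 < ui)
    (s : ℝ) :
    ∫ ur : ℝ, callPayoffFT K ((ur : ℂ) + I * ui) * Complex.exp (-I * ur * s)
      = 2 * π * ((max (Real.exp s - K) 0 * Real.exp (-(ui * s)) : ℝ) : ℂ) := by
  have hdamp : ∀ t : ℝ, Complex.exp (I * (I * ui) * t)
      = (Real.exp (-(ui * t)) : ℂ) := fun t => by
    rw [Complex.ofReal_exp]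
    congr 1
    push_cast
    linear_combination (ui * t : ℂ) * Complex.I_sq
  have htransform : ∀ ω : ℝ, ∫ t : ℝ, Complex.exp (I * ω * t) *
      (((max (Real.exp t - K) 0 : ℝ) : ℂ) * Complex.exp (I * (I * ui) * t))
        = callPayoffFT K (ω + I * ui) := fun ω => by
    rw [← integral_callPayoff_mul_cexp hK (u := ω + I * ui) (by simpa using hui)]
    congr 1
    ext t
    rw [mul_left_comm, ← Complex.exp_add]
    ring_nf
  rw [integral_mul_cexp_neg_eq_two_pi_mul
    (integrable_callPayoff_mul_cexp hK (u := I * ui) (by simpa using hui))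
    (integrable_callPayoffFT_shift K hui) htransform (by fun_prop), hdamp]
  push_cast
  ring

theorem genCharFun_neg_shift (q : ℝ → ℝ) (ur ui : ℝ) :
    genCharFun q (-((ur : ℂ) + I * ui))
      = ∫ s : ℝ, Complex.exp (-I * ur * s) * ((Real.exp (ui * s) * q s : ℝ) : ℂ) := by
  rw [genCharFun]
  congr 1
  ext s
  rw [Complex.ofReal_mul, ← mul_assoc, Complex.ofReal_exp, ← Complex.exp_add]
  congr 2
  push_cast
  linear_combination (-(ui * s) : ℂ) * Complex.I_sq

theorem parseval_call_pricing_general (K r T : ℝ) (hK : 0 < K) (ui : ℝ) (hui : 1 < ui)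
    (q : ℝ → ℝ)
    (hq_int : Integrable (fun s : ℝ => Real.exp (ui * s) * q s)) :
    ((Real.exp (-r * T) * ∫ s : ℝ, max (Real.exp s - K) 0 * q s : ℝ) : ℂ)
      = ((Real.exp (-r * T) : ℝ) : ℂ) / (2 * (Real.pi : ℂ)) *
          ∫ ur : ℝ, callPayoffFT K ((ur : ℂ) + Complex.I * (ui : ℂ)) *
            genCharFun q (-((ur : ℂ) + Complex.I * (ui : ℂ))) := by
  have hprice : ∫ ur : ℝ, callPayoffFT K ((ur : ℂ) + I * ui) *
        genCharFun q (-((ur : ℂ) + I * ui))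
      = 2 * π * ((∫ s : ℝ, max (Real.exp s - K) 0 * q s : ℝ) : ℂ) := by
    calc ∫ ur : ℝ, callPayoffFT K ((ur : ℂ) + I * ui) *
          genCharFun q (-((ur : ℂ) + I * ui))
        = ∫ ur : ℝ, callPayoffFT K ((ur : ℂ) + I * ui) *
          ∫ s : ℝ, Complex.exp (-I * ur * s) * ((Real.exp (ui * s) * q s : ℝ) : ℂ) := by
          simp_rw [genCharFun_neg_shift]
      _ = ∫ s : ℝ, (∫ ur : ℝ, callPayoffFT K ((ur : ℂ) + I * ui) *
          Complex.exp (-I * ur * s)) * ((Real.exp (ui * s) * q s : ℝ) : ℂ) :=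
          integral_mul_integral_cexp_swap (integrable_callPayoffFT_shift K hui) hq_int.ofReal
      _ = ∫ s : ℝ, 2 * π * ((max (Real.exp s - K) 0 * q s : ℝ) : ℂ) := by
          congr 1
          ext s
          rw [integral_callPayoffFT_shift_mul_cexp hK hui, mul_assoc, ← Complex.ofReal_mul,
            Real.exp_neg]
          field_simp
      _ = 2 * π * ((∫ s : ℝ, max (Real.exp s - K) 0 * q s : ℝ) : ℂ) := by
          rw [integral_const_mul, integral_complex_ofReal]
  rw [hprice]
  push_cast
  field_simp

/-- Parseval/Plancherel pricing formula along the shifted contour `Im u = u_i`: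
the discounted call price `e^{-rT} ∫ max(e^s - K, 0) q(s) ds` equals
`(e^{-rT}/(2π)) ∫_ℝ Ĉ_T(u_r + i u_i) q̂(-(u_r + i u_i)) du_r`. -/
theorem parseval_call_pricing (K r T : ℝ) (hK : 0 < K) (ui : ℝ) (hui : 1 < ui)
    (q : ℝ → ℝ) (hq_nonneg : ∀ s, 0 ≤ q s) (hq_prob : (∫ s : ℝ, q s) = 1)
    (hq_int : Integrable (fun s : ℝ => Real.exp (ui * s) * q s))
    (hInv : ∀ s : ℝ, (q s : ℂ) = (1 / (2 * (Real.pi : ℂ))) *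
      ∫ ur : ℝ, Complex.exp (-Complex.I * ((ur : ℂ) + Complex.I * (ui : ℂ)) * (s : ℂ)) *
        genCharFun q ((ur : ℂ) + Complex.I * (ui : ℂ))) :
    ((Real.exp (-r * T) * ∫ s : ℝ, max (Real.exp s - K) 0 * q s : ℝ) : ℂ)
      = ((Real.exp (-r * T) : ℝ) : ℂ) / (2 * (Real.pi : ℂ)) *
          ∫ ur : ℝ, callPayoffFT K ((ur : ℂ) + Complex.I * (ui : ℂ)) *
            genCharFun q (-((ur : ℂ) + Complex.I * (ui : ℂ))) :=
  parseval_call_pricing_general K r T hK ui hui q hq_int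
end
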